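/- For all real s and all α > 0, the pointwise limit as α → ∞ of f_α(s) := (1/(2α))·log(cosh(αs)/cosh(α(1−s))) + 1/2 is f_I(s) := max(min(s,1),0). -/

import Mathlib

/-! Since `exp |t| / 2 ≤ cosh t ≤ exp |t|`, the function `log (cosh (α x)) / α` tends to `|x|`
as `α → ∞`. Splitting the logarithm of the quotient, `f_α(s)` therefore tends to
`(|s| - |1 - s| + 1) / 2`, which is the saturated identity `max (min s 1) 0`. -/

open Filter Real Topology

namespace Real

lemma cosh_le_exp_abs (t : ℝ) : cosh t ≤ exp |t| := by
  rw [← cosh_abs, cosh_eq]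
  linarith [exp_le_exp.2 (neg_le_self (abs_nonneg t))]

lemma exp_abs_le_two_mul_cosh (t : ℝ) : exp |t| ≤ 2 * cosh t := by
  rw [← cosh_abs, cosh_eq]
  linarith [exp_pos (-|t|)]

lemma log_cosh_le_abs (t : ℝ) : log (cosh t) ≤ |t| := by
  simpa using log_le_log (cosh_pos t) (cosh_le_exp_abs t)

lemma abs_sub_log_two_le_log_cosh (t : ℝ) : |t| - log 2 ≤ log (cosh t) := by
  have h := log_le_log (exp_pos _) (exp_abs_le_two_mul_cosh t)
  rw [log_exp, log_mul two_ne_zero (cosh_pos t).ne'] at h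
  linarith

lemma tendsto_log_cosh_mul_div_atTop (x : ℝ) :
    Tendsto (fun α : ℝ => log (cosh (α * x)) / α) atTop (𝓝 |x|) := by
  have lower : Tendsto (fun α : ℝ => |x| - log 2 / α) atTop (𝓝 |x|) := by
    simpa [div_eq_mul_inv] using tendsto_const_nhds.sub (tendsto_inv_atTop_zero.const_mul (log 2))
  refine tendsto_of_tendsto_of_tendsto_of_le_of_le' lower tendsto_const_nhds ?_ ?_ <;>
    filter_upwards [eventually_gt_atTop 0] with α hα
  · have h := abs_sub_log_two_le_log_cosh (α * x)
    rw [abs_mul, abs_of_pos hα] at h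
    rw [le_div_iff₀ hα, sub_mul, div_mul_cancel₀ _ hα.ne']
    linarith
  · have h := log_cosh_le_abs (α * x)
    rw [abs_mul, abs_of_pos hα] at h
    rwa [div_le_iff₀ hα, mul_comm |x|]

end Real

lemma abs_sub_abs_one_sub_add_one_div_two (s : ℝ) :
    (|s| - |1 - s| + 1) / 2 = max (min s 1) 0 := by
  rcases le_total s 0 with hs | hs
  · rw [abs_of_nonpos hs, abs_of_nonneg (by linarith), min_eq_left (by linarith), max_eq_right hs]
    ring
  rcases le_total s 1 with hs1 | hs1
  · rw [abs_of_nonneg hs, abs_of_nonneg (by linarith), min_eq_left hs1, max_eq_left hs]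
    ring
  · rw [abs_of_nonneg hs, abs_of_nonpos (by linarith), min_eq_right hs1, max_eq_left zero_le_one]
    ring

theorem falpha_tendsto_saturated_identity (s : ℝ) :
    Tendsto (fun α : ℝ =>
      (1 / (2 * α)) * Real.log (Real.cosh (α * s) / Real.cosh (α * (1 - s))) + 1 / 2)
      atTop (nhds (max (min s 1) 0)) := by
  have limit := ((tendsto_log_cosh_mul_div_atTop s).sub
    (tendsto_log_cosh_mul_div_atTop (1 - s))).add_const 1 |>.div_const 2
  rw [abs_sub_abs_one_sub_add_one_div_two] at limit
  refine limit.congr' ?_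
  filter_upwards [eventually_gt_atTop 0] with α hα
  rw [log_div (cosh_pos _).ne' (cosh_pos _).ne']
  field_simp
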